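/- The relation 𝔸 between the models M₁ (quasi-partitions with ≺₁) and M₂ (quasi-partitions with ⊴), as defined, is a bi-asimulation, and v 𝔸 w where v = (3ℕ₊, 3ℕ₊+1, 3ℕ₊+2) and w = (2ℕ₊, ∅, 2ℕ₊+1). -/
import Mathlib

set_option linter.constructorNameAsVariable false

/-- A quasi-partition of the positive natural numbers. -/
@[ext] structure QP where
  A : Set ℕ+
  B : Set ℕ+
  C : Set ℕ+
  union_eq : A ∪ B ∪ C = Set.univ
  dAB : Disjoint A B
  dAC : Disjoint A C
  dBC : Disjoint B C
  infA : A.Infinite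
  infC : C.Infinite
  hB : B = ∅ ∨ B.Infinite

/-- The relation ⊴ on quasi-partitions. -/
def QP.le (p q : QP) : Prop := p.A ⊆ q.A ∧ q.C ⊆ p.C

lemma QP.mem_cases (p : QP) (x : ℕ+) : x ∈ p.A ∨ x ∈ p.B ∨ x ∈ p.C := by
  have hx : x ∈ p.A ∪ p.B ∪ p.C := by rw [p.union_eq]; trivial
  rcases hx with (h | h) | h
  · exact Or.inl h
  · exact Or.inr (Or.inl h)
  · exact Or.inr (Or.inr h)

lemma QP.B_compl (p : QP) : p.B = (p.A ∪ p.C)ᶜ := by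
  ext x
  simp only [Set.mem_compl_iff, Set.mem_union]
  constructor
  · intro hx
    push_neg
    exact ⟨fun hA => Set.disjoint_left.mp p.dAB hA hx,
           Set.disjoint_left.mp p.dBC hx⟩
  · intro hx
    push_neg at hx
    rcases p.mem_cases x with h | h | h
    · exact absurd h hx.1
    · exact h
    · exact absurd h hx.2

lemma QP.le_refl (p : QP) : p.le p := ⟨subset_rfl, subset_rfl⟩

lemma QP.le_trans {p q r : QP} (h1 : p.le q) (h2 : q.le r) : p.le r :=
  ⟨h1.1.trans h2.1, h2.2.trans h1.2⟩

lemma QP.le_antisymm {p q : QP} (h1 : p.le q) (h2 : q.le p) : p = q := by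
  have hA : p.A = q.A := Set.Subset.antisymm h1.1 h2.1
  have hC : p.C = q.C := Set.Subset.antisymm h2.2 h1.2
  have hBc : p.B = q.B := by rw [p.B_compl, q.B_compl, hA, hC]
  exact QP.ext hA hBc hC

lemma QP.monoP {p q : QP} (h : p.le q) : p.A ∪ p.B ⊆ q.A ∪ q.B := by
  intro x hx
  have hxc : x ∉ p.C := by
    rcases hx with h1 | h1
    · exact Set.disjoint_left.mp p.dAC h1
    · exact Set.disjoint_left.mp p.dBC h1
  have hqc : x ∉ q.C := fun hc => hxc (h.2 hc)
  rcases q.mem_cases x with h1 | h1 | h1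
  · exact Or.inl h1
  · exact Or.inr h1
  · exact absurd h1 hqc

lemma infinite_mod {m r : ℕ} (hm : 0 < m) (hr : r < m) :
    {n : ℕ+ | (n : ℕ) % m = r}.Infinite := by
  apply Set.infinite_of_injective_forall_mem
    (f := fun k : ℕ => (⟨m * (k + 1) + r, Nat.add_pos_left (Nat.mul_pos hm k.succ_pos) r⟩ : ℕ+))
  · intro k j h
    have h' : m * (k + 1) + r = m * (j + 1) + r :=
      congrArg (fun x : ℕ+ => (x : ℕ)) h
    have := Nat.eq_of_mul_eq_mul_left hm (Nat.add_right_cancel h')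
    omega
  · intro k
    show (m * (k + 1) + r) % m = r
    rw [add_comm, Nat.add_mul_mod_self_left, Nat.mod_eq_of_lt hr]

def v1 : Set ℕ+ := {n | (n : ℕ) % 3 = 0}
def v2 : Set ℕ+ := {n | (n : ℕ) % 3 = 1}
def v3 : Set ℕ+ := {n | (n : ℕ) % 3 = 2}
def w1 : Set ℕ+ := {n | (n : ℕ) % 2 = 0}
def w3 : Set ℕ+ := {n | (n : ℕ) % 2 = 1}

/-- The quasi-partition v = (3ℕ₊, 3ℕ₊+1, 3ℕ₊+2). -/
def vQP : QP where
  A := v1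
  B := v2
  C := v3
  union_eq := by ext n; simp only [v1, v2, v3, Set.mem_union, Set.mem_setOf_eq, Set.mem_univ, iff_true]; omega
  dAB := by rw [Set.disjoint_left]; intro n h1 h2; simp only [v1, v2, Set.mem_setOf_eq] at h1 h2; omega
  dAC := by rw [Set.disjoint_left]; intro n h1 h2; simp only [v1, v3, Set.mem_setOf_eq] at h1 h2; omega
  dBC := by rw [Set.disjoint_left]; intro n h1 h2; simp only [v2, v3, Set.mem_setOf_eq] at h1 h2; omega
  infA := infinite_mod (by norm_num) (by norm_num)
  infC := infinite_mod (by norm_num) (by norm_num)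
  hB := Or.inr (infinite_mod (by norm_num) (by norm_num))

/-- The quasi-partition w = (2ℕ₊, ∅, 2ℕ₊+1). -/
def wQP : QP where
  A := w1
  B := ∅
  C := w3
  union_eq := by ext n; simp only [w1, w3, Set.mem_union, Set.mem_setOf_eq, Set.mem_empty_iff_false, Set.mem_univ, iff_true, or_false]; omega
  dAB := by simp
  dAC := by rw [Set.disjoint_left]; intro n h1 h2; simp only [w1, w3, Set.mem_setOf_eq] at h1 h2; omega
  dBC := by simp
  infA := infinite_mod (by norm_num) (by norm_num)
  infC := infinite_mod (by norm_num) (by norm_num)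
  hB := Or.inl rfl

/-- The relation ≺₁ on quasi-partitions. -/
def prec1 (p q : QP) : Prop :=
  p.le q ∧ ((vQP.le p ∧ (p.B ∩ v2).Infinite) → (q.B ∩ v2).Infinite)

lemma prec1_refl (p : QP) : prec1 p p := ⟨p.le_refl, fun h => h.2⟩

lemma prec1_trans {p q r : QP} (h1 : prec1 p q) (h2 : prec1 q r) : prec1 p r := by
  refine ⟨QP.le_trans h1.1 h2.1, fun h => ?_⟩
  exact h2.2 ⟨QP.le_trans h.1 h1.1, h1.2 h⟩


/-- A relational signature (predicate symbols with arities; no function symbols). -/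
structure Signature where
  Pred : Type
  arity : Pred → ℕ

/-- Formulas of first-order bi-intuitionistic logic in context `n`
(de Bruijn style: free variables are `Fin n`). -/
inductive Fml (S : Signature) : ℕ → Type where
  | atom : {n : ℕ} → (P : S.Pred) → (Fin (S.arity P) → Fin n) → Fml S n
  | bot {n} : Fml S n
  | top {n} : Fml S n
  | and {n} : Fml S n → Fml S n → Fml S n
  | or {n} : Fml S n → Fml S n → Fml S n
  | imp {n} : Fml S n → Fml S n → Fml S n
  | coimp {n} : Fml S n → Fml S n → Fml S n
  | all {n} : Fml S (n + 1) → Fml S n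
  | ex {n} : Fml S (n + 1) → Fml S n

/-- A constant-domain Kripke model for first-order bi-intuitionistic logic. -/
structure KModel (S : Signature) where
  W : Type
  R : W → W → Prop
  refl : ∀ w, R w w
  trans : ∀ {u v w}, R u v → R v w → R u w
  D : Type
  dne : Nonempty D
  V : (P : S.Pred) → W → Set (Fin (S.arity P) → D)
  mono : ∀ (P : S.Pred) {w v : W}, R w v → V P w ⊆ V P v

/-- The forcing relation for constant-domain Kripke semantics. -/
def force {S : Signature} (M : KModel S) :
    {n : ℕ} → M.W → (Fin n → M.D) → Fml S n → Prop
  | _, w, ρ, .atom P ts => (fun i => ρ (ts i)) ∈ M.V P w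
  | _, _, _, .bot => False
  | _, _, _, .top => True
  | _, w, ρ, .and φ ψ => force M w ρ φ ∧ force M w ρ ψ
  | _, w, ρ, .or φ ψ => force M w ρ φ ∨ force M w ρ ψ
  | _, w, ρ, .imp φ ψ => ∀ v, M.R w v → force M v ρ φ → force M v ρ ψ
  | _, w, ρ, .coimp φ ψ => ∃ v, M.R v w ∧ force M v ρ φ ∧ ¬ force M v ρ ψ
  | _, w, ρ, .all φ => ∀ a : M.D, force M w (Fin.snoc ρ a) φ
  | _, w, ρ, .ex φ => ∃ a : M.D, force M w (Fin.snoc ρ a) φ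

/-- The bi-asimulation conditions: `A` relates `M₀`-pointed-tuples to `M₁`-pointed-tuples,
`B` the converse direction. -/
structure IsBiAsim (S : Signature) (M₀ M₁ : KModel S)
    (A : ∀ n, M₀.W → (Fin n → M₀.D) → M₁.W → (Fin n → M₁.D) → Prop)
    (B : ∀ n, M₁.W → (Fin n → M₁.D) → M₀.W → (Fin n → M₀.D) → Prop) : Prop where
  atomA : ∀ {n} {w da v db}, A n w da v db → ∀ (P : S.Pred) (ts : Fin (S.arity P) → Fin n),
    (fun i => da (ts i)) ∈ M₀.V P w → (fun i => db (ts i)) ∈ M₁.V P v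
  atomB : ∀ {n} {v db w da}, B n v db w da → ∀ (P : S.Pred) (ts : Fin (S.arity P) → Fin n),
    (fun i => db (ts i)) ∈ M₁.V P v → (fun i => da (ts i)) ∈ M₀.V P w
  backA : ∀ {n} {w da v db}, A n w da v db →
    ∀ v₀, M₁.R v v₀ → ∃ w₀, M₀.R w w₀ ∧ A n w₀ da v₀ db ∧ B n v₀ db w₀ da
  backB : ∀ {n} {v db w da}, B n v db w da →
    ∀ w₀, M₀.R w w₀ → ∃ v₀, M₁.R v v₀ ∧ B n v₀ db w₀ da ∧ A n w₀ da v₀ db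
  forthA : ∀ {n} {w da v db}, A n w da v db →
    ∀ w₀, M₀.R w₀ w → ∃ v₀, M₁.R v₀ v ∧ A n w₀ da v₀ db ∧ B n v₀ db w₀ da
  forthB : ∀ {n} {v db w da}, B n v db w da →
    ∀ v₀, M₁.R v₀ v → ∃ w₀, M₀.R w₀ w ∧ B n v₀ db w₀ da ∧ A n w₀ da v₀ db
  leftA : ∀ {n} {w da v db}, A n w da v db →
    ∀ b : M₁.D, ∃ a : M₀.D, A (n + 1) w (Fin.snoc da a) v (Fin.snoc db b)
  leftB : ∀ {n} {v db w da}, B n v db w da →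
    ∀ a : M₀.D, ∃ b : M₁.D, B (n + 1) v (Fin.snoc db b) w (Fin.snoc da a)
  rightA : ∀ {n} {w da v db}, A n w da v db →
    ∀ a : M₀.D, ∃ b : M₁.D, A (n + 1) w (Fin.snoc da a) v (Fin.snoc db b)
  rightB : ∀ {n} {v db w da}, B n v db w da →
    ∀ b : M₁.D, ∃ a : M₀.D, B (n + 1) v (Fin.snoc db b) w (Fin.snoc da a)


/-- The bi-asimulation relation 𝔸 between quasi-partition models. -/
def AA (n : ℕ) (p : QP) (da : Fin n → ℕ+) (q : QP) (db : Fin n → ℕ+) : Prop :=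
  (∀ k l, da k = da l ↔ db k = db l) ∧
  (∀ k, da k ∈ p.A → db k ∈ q.A) ∧
  (∀ k, da k ∈ p.B → db k ∈ q.A ∪ q.B)

inductive PredPQ | P | Q
abbrev SigPQ : Signature := ⟨PredPQ, fun _ => 1⟩


/-- The model M₁ of the {P,Q} signature: quasi-partitions with ≺₁. -/
@[reducible] def M1pq : KModel SigPQ where
  W := QP
  R := prec1
  refl := prec1_refl
  trans := prec1_trans
  D := ℕ+
  dne := ⟨1⟩
  V := fun P p => match P with
    | .P => {t | t 0 ∈ p.A ∪ p.B}
    | .Q => {t | t 0 ∈ p.A}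
  mono := by
    intro P w v h t ht
    cases P
    · exact QP.monoP h.1 ht
    · exact h.1.1 ht


/-- The model M₂ of the {P,Q} signature: quasi-partitions with ⊴. -/
@[reducible] def M2pq : KModel SigPQ where
  W := QP
  R := QP.le
  refl := QP.le_refl
  trans := QP.le_trans
  D := ℕ+
  dne := ⟨1⟩
  V := fun P p => match P with
    | .P => {t | t 0 ∈ p.A ∪ p.B}
    | .Q => {t | t 0 ∈ p.A}
  mono := by
    intro P w v h t ht
    cases P
    · exact QP.monoP h ht
    · exact h.1 ht


section BiAsimProof
open Classical

inductive Tri | a | b | c deriving DecidableEq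

open scoped Classical in
noncomputable def QP.part (p : QP) (x : ℕ+) : Tri :=
  if x ∈ p.A then .a else if x ∈ p.B then .b else .c

lemma QP.part_eq_a {p : QP} {x : ℕ+} : p.part x = Tri.a ↔ x ∈ p.A := by
  unfold QP.part
  split_ifs with h1 h2
  · simp [h1]
  · exact iff_of_false (by simp) h1
  · exact iff_of_false (by simp) h1

lemma QP.part_eq_b {p : QP} {x : ℕ+} : p.part x = Tri.b ↔ x ∈ p.B := by
  unfold QP.part
  split_ifs with h1 h2
  · exact iff_of_false (by simp) (Set.disjoint_left.mp p.dAB h1)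
  · simp [h2]
  · exact iff_of_false (by simp) h2

lemma QP.part_eq_c {p : QP} {x : ℕ+} : p.part x = Tri.c ↔ x ∈ p.C := by
  unfold QP.part
  split_ifs with h1 h2
  · exact iff_of_false (by simp) (Set.disjoint_left.mp p.dAC h1)
  · exact iff_of_false (by simp) (Set.disjoint_left.mp p.dBC h2)
  · exact iff_of_true rfl (by
      rcases p.mem_cases x with h | h | h
      · exact absurd h h1
      · exact absurd h h2
      · exact h)

lemma exists_split {S : Set ℕ+} (hS : S.Infinite) :
    ∃ E : Set ℕ+, E ⊆ S ∧ E.Infinite ∧ (S \ E).Infinite := by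
  set f := Set.Infinite.natEmbedding _ hS with hf
  refine ⟨Set.range (fun k : ℕ => (f (2 * k) : ℕ+)), ?_, ?_, ?_⟩
  · rintro x ⟨k, rfl⟩; exact (f (2 * k)).2
  · apply Set.infinite_of_injective_forall_mem (f := fun k : ℕ => ((f (2 * k) : ℕ+)))
    · intro k j h
      have := f.injective (Subtype.ext h)
      omega
    · intro k; exact ⟨k, rfl⟩
  · apply Set.infinite_of_injective_forall_mem (f := fun k : ℕ => ((f (2 * k + 1) : ℕ+)))
    · intro k j h
      have := f.injective (Subtype.ext h)
      omega
    · intro k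
      refine ⟨(f (2 * k + 1)).2, ?_⟩
      rintro ⟨j, hj⟩
      have := f.injective (Subtype.ext hj)
      omega

def TT {n : ℕ} (da : Fin n → ℕ+) (t : Fin n → Tri) (s : Tri) : Set ℕ+ :=
  {x | ∃ k, da k = x ∧ t k = s}

lemma TT_subset_range {n : ℕ} {da : Fin n → ℕ+} {t : Fin n → Tri} {s : Tri} :
    TT da t s ⊆ Set.range da := by
  rintro x ⟨k, rfl, _⟩; exact ⟨k, rfl⟩

lemma TT_disj {n : ℕ} {da : Fin n → ℕ+} {t : Fin n → Tri}
    (hwd : ∀ k l, da k = da l → t k = t l)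
    {s s' : Tri} (hss : s ≠ s') {x : ℕ+}
    (h : x ∈ TT da t s) (h' : x ∈ TT da t s') : False := by
  obtain ⟨k, rfl, hk⟩ := h
  obtain ⟨l, hl, hl'⟩ := h'
  exact hss (by rw [← hk, ← hl', hwd k l hl.symm])

lemma up_lemma (p : QP) {n : ℕ} (da : Fin n → ℕ+) (t : Fin n → Tri)
    (hwd : ∀ k l, da k = da l → t k = t l)
    (h1 : ∀ k, da k ∈ p.A → t k = Tri.a)
    (h2 : ∀ k, da k ∈ p.B → t k ≠ Tri.c) :
    ∃ p₀ : QP, p.le p₀ ∧ (∀ k, p₀.part (da k) = t k) ∧ p.B \ Set.range da ⊆ p₀.B := by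
  obtain ⟨E, hES, hEinf, hEco⟩ : ∃ E : Set ℕ+, E ⊆ p.C \ Set.range da ∧
      (p.B = ∅ → E.Infinite) ∧ ((p.C \ Set.range da) \ E).Infinite := by
    by_cases hb : p.B = ∅
    · obtain ⟨E, e1, e2, e3⟩ := exists_split (p.infC.diff (Set.finite_range da))
      exact ⟨E, e1, fun _ => e2, e3⟩
    · exact ⟨∅, by simp, fun h => absurd h hb,
        by simpa using p.infC.diff (Set.finite_range da)⟩
  have hab : ∀ y, y ∈ p.A → y ∉ p.B := fun y h h' => Set.disjoint_left.mp p.dAB h h'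
  have hac : ∀ y, y ∈ p.A → y ∉ p.C := fun y h h' => Set.disjoint_left.mp p.dAC h h'
  have hbc : ∀ y, y ∈ p.B → y ∉ p.C := fun y h h' => Set.disjoint_left.mp p.dBC h h'
  have hTb : ∀ x ∈ TT da t Tri.b, x ∉ p.A := by
    rintro x ⟨k, rfl, hk⟩ hx; simp [h1 k hx] at hk
  have hTc : ∀ x ∈ TT da t Tri.c, x ∈ p.C := by
    rintro x ⟨k, rfl, hk⟩
    rcases p.mem_cases (da k) with h | h | h
    · simp [h1 k h] at hk
    · exact absurd hk (h2 k h)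
    · exact h
  have tab : ∀ x, x ∈ TT da t Tri.a → x ∈ TT da t Tri.b → False :=
    fun x => TT_disj hwd (by decide)
  have tac : ∀ x, x ∈ TT da t Tri.a → x ∈ TT da t Tri.c → False :=
    fun x => TT_disj hwd (by decide)
  have tbc : ∀ x, x ∈ TT da t Tri.b → x ∈ TT da t Tri.c → False :=
    fun x => TT_disj hwd (by decide)
  have hE2 : ∀ x ∈ E, x ∈ p.C ∧ x ∉ Set.range da := fun x hx => ⟨(hES hx).1, (hES hx).2⟩
  have hra : ∀ x, x ∈ TT da t Tri.a → x ∈ Set.range da := fun x h => TT_subset_range h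
  have hrb : ∀ x, x ∈ TT da t Tri.b → x ∈ Set.range da := fun x h => TT_subset_range h
  refine ⟨{ A := p.A ∪ TT da t Tri.a,
            B := (p.B \ TT da t Tri.a) ∪ TT da t Tri.b ∪ E,
            C := (p.C \ (TT da t Tri.a ∪ TT da t Tri.b)) \ E,
            union_eq := ?_, dAB := ?_, dAC := ?_, dBC := ?_,
            infA := ?_, infC := ?_, hB := ?_ },
        ⟨Set.subset_union_left, fun x hx => hx.1.1⟩, ?_, ?_⟩
  · ext x
    simp only [Set.mem_union, Set.mem_diff, Set.mem_univ, iff_true]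
    rcases p.mem_cases x with h | h | h
    · exact Or.inl (Or.inl (Or.inl h))
    · by_cases ha : x ∈ TT da t Tri.a
      · exact Or.inl (Or.inl (Or.inr ha))
      · exact Or.inl (Or.inr (Or.inl (Or.inl ⟨h, ha⟩)))
    · by_cases ha : x ∈ TT da t Tri.a
      · exact Or.inl (Or.inl (Or.inr ha))
      · by_cases hbx : x ∈ TT da t Tri.b
        · exact Or.inl (Or.inr (Or.inl (Or.inr hbx)))
        · by_cases he : x ∈ E
          · exact Or.inl (Or.inr (Or.inr he))
          · exact Or.inr ⟨⟨h, by rintro (h' | h') <;> [exact ha h'; exact hbx h']⟩, he⟩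
  · rw [Set.disjoint_left]
    intro x hx hy
    simp only [Set.mem_union, Set.mem_diff] at hx hy
    rcases hy with (⟨hb', hna⟩ | htb) | he
    · rcases hx with h | h
      · exact hab x h hb'
      · exact hna h
    · rcases hx with h | h
      · exact hTb x htb h
      · exact tab x h htb
    · rcases hx with h | h
      · exact hac x h (hE2 x he).1
      · exact (hE2 x he).2 (hra x h)
  · rw [Set.disjoint_left]
    intro x hx hy
    simp only [Set.mem_union, Set.mem_diff] at hx hy
    rcases hx with h | h
    · exact hac x h hy.1.1
    · exact hy.1.2 (Or.inl h)
  · rw [Set.disjoint_left]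
    intro x hx hy
    simp only [Set.mem_union, Set.mem_diff] at hx hy
    rcases hx with (⟨hb', _⟩ | htb) | he
    · exact hbc x hb' hy.1.1
    · exact hy.1.2 (Or.inr htb)
    · exact hy.2 he
  · exact p.infA.mono Set.subset_union_left
  · refine hEco.mono ?_
    rintro x ⟨⟨hc, hr⟩, he⟩
    refine ⟨⟨hc, ?_⟩, he⟩
    rintro (h | h)
    · exact hr (hra x h)
    · exact hr (hrb x h)
  · by_cases hb : p.B = ∅
    · exact Or.inr ((hEinf hb).mono (fun x hx => Or.inr hx))
    · have hBi := p.hB.resolve_left hb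
      refine Or.inr ((hBi.diff (Set.finite_range da)).mono ?_)
      rintro x ⟨hx1, hx2⟩
      exact Or.inl (Or.inl ⟨hx1, fun h => hx2 (hra x h)⟩)
  · intro k
    cases htk : t k with
    | a => exact QP.part_eq_a.mpr (Or.inr ⟨k, rfl, htk⟩)
    | b => exact QP.part_eq_b.mpr (Or.inl (Or.inr ⟨k, rfl, htk⟩))
    | c =>
        refine QP.part_eq_c.mpr ⟨⟨hTc _ ⟨k, rfl, htk⟩, ?_⟩, ?_⟩
        · rintro (h | h)
          · exact tac _ h ⟨k, rfl, htk⟩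
          · exact tbc _ h ⟨k, rfl, htk⟩
        · intro h
          exact (hE2 _ h).2 ⟨k, rfl⟩
  · rintro x ⟨hx1, hx2⟩
    exact Or.inl (Or.inl ⟨hx1, fun h => hx2 (hra x h)⟩)
lemma v1_infinite : v1.Infinite := infinite_mod (by norm_num) (by norm_num)

lemma down_lemma (p : QP) {n : ℕ} (da : Fin n → ℕ+) (t : Fin n → Tri)
    (hwd : ∀ k l, da k = da l → t k = t l)
    (h1 : ∀ k, da k ∈ p.C → t k = Tri.c)
    (h2 : ∀ k, da k ∈ p.B → t k ≠ Tri.a) :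
    ∃ p₀ : QP, p₀.le p ∧ (∀ k, p₀.part (da k) = t k) ∧
      ((vQP.le p₀ ∧ (p₀.B ∩ v2).Infinite) → (p.B ∩ v2).Infinite) := by
  obtain ⟨E, hES, hEinf, hEco, hEv, hE0⟩ : ∃ E : Set ℕ+, E ⊆ p.A \ Set.range da ∧
      (p.B = ∅ → E.Infinite) ∧ ((p.A \ Set.range da) \ E).Infinite ∧
      ((p.A \ v2).Infinite → E ∩ v2 = ∅) ∧ (p.B ≠ ∅ → E = ∅) := by
    by_cases hb : p.B = ∅
    · by_cases hv : (p.A \ v2).Infinite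
      · obtain ⟨E, e1, e2, e3⟩ := exists_split (hv.diff (Set.finite_range da))
        refine ⟨E, fun x hx => ⟨(e1 hx).1.1, (e1 hx).2⟩, fun _ => e2, ?_, ?_,
          fun h => absurd hb h⟩
        · refine e3.mono ?_
          rintro x ⟨⟨⟨ha, _⟩, hr⟩, he⟩
          exact ⟨⟨ha, hr⟩, he⟩
        · intro _
          ext x
          simp only [Set.mem_inter_iff, Set.mem_empty_iff_false, iff_false, not_and]
          intro hx
          exact fun hv2 => (e1 hx).1.2 hv2
      · obtain ⟨E, e1, e2, e3⟩ := exists_split (p.infA.diff (Set.finite_range da))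
        exact ⟨E, e1, fun _ => e2, e3, fun h => absurd h hv, fun h => absurd hb h⟩
    · exact ⟨∅, by simp, fun h => absurd h hb,
        by simpa using p.infA.diff (Set.finite_range da), by simp, fun _ => rfl⟩
  have hab : ∀ y, y ∈ p.A → y ∉ p.B := fun y h h' => Set.disjoint_left.mp p.dAB h h'
  have hac : ∀ y, y ∈ p.A → y ∉ p.C := fun y h h' => Set.disjoint_left.mp p.dAC h h'
  have hbc : ∀ y, y ∈ p.B → y ∉ p.C := fun y h h' => Set.disjoint_left.mp p.dBC h h'
  have hTaA : ∀ x ∈ TT da t Tri.a, x ∈ p.A := by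
    rintro x ⟨k, rfl, hk⟩
    rcases p.mem_cases (da k) with h | h | h
    · exact h
    · exact absurd hk (h2 k h)
    · simp [h1 k h] at hk
  have hTbnC : ∀ x ∈ TT da t Tri.b, x ∉ p.C := by
    rintro x ⟨k, rfl, hk⟩ h; simp [h1 k h] at hk
  have tab : ∀ x, x ∈ TT da t Tri.a → x ∈ TT da t Tri.b → False :=
    fun x => TT_disj hwd (by decide)
  have tac : ∀ x, x ∈ TT da t Tri.a → x ∈ TT da t Tri.c → False :=
    fun x => TT_disj hwd (by decide)
  have tbc : ∀ x, x ∈ TT da t Tri.b → x ∈ TT da t Tri.c → False :=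
    fun x => TT_disj hwd (by decide)
  have hE2 : ∀ x ∈ E, x ∈ p.A ∧ x ∉ Set.range da := fun x hx => ⟨(hES hx).1, (hES hx).2⟩
  have hra : ∀ x, x ∈ TT da t Tri.a → x ∈ Set.range da := fun x h => TT_subset_range h
  have hrb : ∀ x, x ∈ TT da t Tri.b → x ∈ Set.range da := fun x h => TT_subset_range h
  have hrc : ∀ x, x ∈ TT da t Tri.c → x ∈ Set.range da := fun x h => TT_subset_range h
  refine ⟨{ A := p.A \ (TT da t Tri.b ∪ TT da t Tri.c ∪ E),
            B := (p.B \ TT da t Tri.c) ∪ TT da t Tri.b ∪ E,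
            C := p.C ∪ TT da t Tri.c,
            union_eq := ?_, dAB := ?_, dAC := ?_, dBC := ?_,
            infA := ?_, infC := ?_, hB := ?_ },
        ⟨fun x hx => hx.1, fun x hx => Or.inl hx⟩, ?_, ?_⟩
  · ext x
    simp only [Set.mem_union, Set.mem_diff, Set.mem_univ, iff_true]
    rcases p.mem_cases x with h | h | h
    · by_cases hbx : x ∈ TT da t Tri.b
      · exact Or.inl (Or.inr (Or.inl (Or.inr hbx)))
      · by_cases hcx : x ∈ TT da t Tri.c
        · exact Or.inr (Or.inr hcx)
        · by_cases he : x ∈ E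
          · exact Or.inl (Or.inr (Or.inr he))
          · refine Or.inl (Or.inl ⟨h, ?_⟩)
            rintro ((h' | h') | h')
            · exact hbx h'
            · exact hcx h'
            · exact he h'
    · by_cases hcx : x ∈ TT da t Tri.c
      · exact Or.inr (Or.inr hcx)
      · exact Or.inl (Or.inr (Or.inl (Or.inl ⟨h, hcx⟩)))
    · exact Or.inr (Or.inl h)
  · rw [Set.disjoint_left]
    intro x hx hy
    simp only [Set.mem_union, Set.mem_diff] at hx hy
    rcases hy with (⟨hb', _⟩ | htb) | he
    · exact hab x hx.1 hb'
    · exact hx.2 (Or.inl (Or.inl htb))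
    · exact hx.2 (Or.inr he)
  · rw [Set.disjoint_left]
    intro x hx hy
    simp only [Set.mem_union, Set.mem_diff] at hx hy
    rcases hy with h | h
    · exact hac x hx.1 h
    · exact hx.2 (Or.inl (Or.inr h))
  · rw [Set.disjoint_left]
    intro x hx hy
    simp only [Set.mem_union, Set.mem_diff] at hx hy
    rcases hx with (⟨hb', hnc⟩ | htb) | he
    · rcases hy with h | h
      · exact hbc x hb' h
      · exact hnc h
    · rcases hy with h | h
      · exact hTbnC x htb h
      · exact tbc x htb h
    · rcases hy with h | h
      · exact hac x (hE2 x he).1 h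
      · exact (hE2 x he).2 (hrc x h)
  · refine hEco.mono ?_
    rintro x ⟨⟨ha, hr⟩, he⟩
    refine ⟨ha, ?_⟩
    rintro ((h | h) | h)
    · exact hr (hrb x h)
    · exact hr (hrc x h)
    · exact he h
  · exact p.infC.mono Set.subset_union_left
  · by_cases hb : p.B = ∅
    · exact Or.inr ((hEinf hb).mono (fun x hx => Or.inr hx))
    · have hBi := p.hB.resolve_left hb
      refine Or.inr ((hBi.diff (Set.finite_range da)).mono ?_)
      rintro x ⟨hx1, hx2⟩
      exact Or.inl (Or.inl ⟨hx1, fun h => hx2 (hrc x h)⟩)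
  · intro k
    cases htk : t k with
    | a =>
        refine QP.part_eq_a.mpr ⟨hTaA _ ⟨k, rfl, htk⟩, ?_⟩
        rintro ((h | h) | h)
        · exact tab _ ⟨k, rfl, htk⟩ h
        · exact tac _ ⟨k, rfl, htk⟩ h
        · exact (hE2 _ h).2 ⟨k, rfl⟩
    | b => exact QP.part_eq_b.mpr (Or.inl (Or.inr ⟨k, rfl, htk⟩))
    | c => exact QP.part_eq_c.mpr (Or.inr ⟨k, rfl, htk⟩)
  · rintro ⟨hvle, hinf⟩
    by_cases hb : p.B = ∅
    · exfalso
      by_cases hv : (p.A \ v2).Infinite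
      · have hEv2 := hEv hv
        refine hinf (((Set.finite_range da).subset ?_))
        rintro x ⟨hxB, hxv⟩
        rcases hxB with (⟨hx1, _⟩ | htb) | he
        · rw [hb] at hx1; exact absurd hx1 (Set.notMem_empty x)
        · exact hrb x htb
        · exact absurd (Set.mem_inter he hxv) (by rw [hEv2]; exact Set.notMem_empty x)
      · refine hv (v1_infinite.mono ?_)
        intro x hx
        refine ⟨(hvle.1 hx).1, ?_⟩
        have hx' : (x : ℕ) % 3 = 0 := hx
        simp only [v2, Set.mem_setOf_eq]
        omega
    · refine ((hinf.diff (Set.finite_range da)).mono ?_)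
      rintro x ⟨⟨hxB, hxv⟩, hxr⟩
      rcases hxB with (⟨hx1, _⟩ | htb) | he
      · exact ⟨hx1, hxv⟩
      · exact absurd (hrb x htb) hxr
      · rw [hE0 hb] at he; exact absurd he (Set.notMem_empty x)
lemma AA_of_parts {n : ℕ} {p q : QP} {da db : Fin n → ℕ+}
    (hbij : ∀ k l, da k = da l ↔ db k = db l)
    (hpt : ∀ k, p.part (da k) = q.part (db k)) :
    AA n p da q db ∧ AA n q db p da := by
  constructor
  · refine ⟨hbij, fun k h => ?_, fun k h => ?_⟩
    · have h' := hpt k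
      rw [QP.part_eq_a.mpr h] at h'
      exact QP.part_eq_a.mp h'.symm
    · have h' := hpt k
      rw [QP.part_eq_b.mpr h] at h'
      exact Or.inr (QP.part_eq_b.mp h'.symm)
  · refine ⟨fun k l => (hbij k l).symm, fun k h => ?_, fun k h => ?_⟩
    · have h' := hpt k
      rw [QP.part_eq_a.mpr h] at h'
      exact QP.part_eq_a.mp h'
    · have h' := hpt k
      rw [QP.part_eq_b.mpr h] at h'
      exact Or.inr (QP.part_eq_b.mp h')

lemma AA_snoc {n : ℕ} {p q : QP} {da : Fin n → ℕ+} {db : Fin n → ℕ+}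
    (h : AA n p da q db) {a b : ℕ+}
    (hab : ∀ k, da k = a ↔ db k = b)
    (h1 : a ∈ p.A → b ∈ q.A) (h2 : a ∈ p.B → b ∈ q.A ∪ q.B) :
    AA (n + 1) p (Fin.snoc da a) q (Fin.snoc db b) := by
  refine ⟨?_, ?_, ?_⟩
  · intro k l
    induction k using Fin.lastCases with
    | last =>
      induction l using Fin.lastCases with
      | last => simp
      | cast l =>
        simp only [Fin.snoc_last, Fin.snoc_castSucc]
        constructor
        · intro h'; exact ((hab l).mp h'.symm).symm
        · intro h'; exact ((hab l).mpr h'.symm).symm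
    | cast k =>
      induction l using Fin.lastCases with
      | last =>
        simp only [Fin.snoc_last, Fin.snoc_castSucc]
        exact hab k
      | cast l =>
        simp only [Fin.snoc_castSucc]
        exact h.1 k l
  · intro k
    induction k using Fin.lastCases with
    | last => simp only [Fin.snoc_last]; exact h1
    | cast k => simp only [Fin.snoc_castSucc]; exact h.2.1 k
  · intro k
    induction k using Fin.lastCases with
    | last => simp only [Fin.snoc_last]; exact h2
    | cast k => simp only [Fin.snoc_castSucc]; exact h.2.2 k

/-- 𝔸 is a bi-asimulation between M₁ and M₂, and v 𝔸 w. -/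
theorem stmt18 :
    IsBiAsim SigPQ M1pq M2pq
      (fun n w da v db => AA n w da v db)
      (fun n v db w da => AA n v db w da) ∧
    AA 0 vQP Fin.elim0 wQP Fin.elim0 := by
  refine ⟨⟨?_, ?_, ?_, ?_, ?_, ?_, ?_, ?_, ?_, ?_⟩,
    fun k => k.elim0, fun k => k.elim0, fun k => k.elim0⟩
  -- atomA
  · intro n w da v db hA P ts hm
    cases P with
    | P =>
      have hm' : da (ts 0) ∈ w.A ∪ w.B := hm
      show db (ts 0) ∈ v.A ∪ v.B
      rcases hm' with h | h
      · exact Or.inl (hA.2.1 _ h)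
      · exact hA.2.2 _ h
    | Q =>
      have hm' : da (ts 0) ∈ w.A := hm
      show db (ts 0) ∈ v.A
      exact hA.2.1 _ hm'
  -- atomB
  · intro n v db w da hB P ts hm
    cases P with
    | P =>
      have hm' : db (ts 0) ∈ v.A ∪ v.B := hm
      show da (ts 0) ∈ w.A ∪ w.B
      rcases hm' with h | h
      · exact Or.inl (hB.2.1 _ h)
      · exact hB.2.2 _ h
    | Q =>
      have hm' : db (ts 0) ∈ v.A := hm
      show da (ts 0) ∈ w.A
      exact hB.2.1 _ hm'
  -- backA
  · intro n p da q db hA q₀ hq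
    obtain ⟨p₀, hle, hm, hBsub⟩ := up_lemma p da (fun k => q₀.part (db k))
      (fun k l hk => by show QP.part q₀ (db k) = QP.part q₀ (db l); rw [(hA.1 k l).mp hk])
      (fun k hk => QP.part_eq_a.mpr (hq.1 (hA.2.1 k hk)))
      (fun k hk hc => by
        have hcc : db k ∈ q.C := hq.2 (QP.part_eq_c.mp hc)
        rcases hA.2.2 k hk with h | h
        · exact Set.disjoint_left.mp q.dAC h hcc
        · exact Set.disjoint_left.mp q.dBC h hcc)
    have hAA := AA_of_parts hA.1 (fun k => hm k)
    refine ⟨p₀, ⟨hle, ?_⟩, hAA.1, hAA.2⟩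
    rintro ⟨-, hinf⟩
    refine (hinf.diff (Set.finite_range da)).mono ?_
    rintro x ⟨⟨hx1, hx2⟩, hx3⟩
    exact ⟨hBsub ⟨hx1, hx3⟩, hx2⟩
  -- backB
  · intro n q db p da hB p₀ hp
    obtain ⟨q₀, hle, hm, -⟩ := up_lemma q db (fun k => p₀.part (da k))
      (fun k l hk => by show QP.part p₀ (da k) = QP.part p₀ (da l); rw [(hB.1 k l).mp hk])
      (fun k hk => QP.part_eq_a.mpr (hp.1.1 (hB.2.1 k hk)))
      (fun k hk hc => by
        have hcc : da k ∈ p.C := hp.1.2 (QP.part_eq_c.mp hc)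
        rcases hB.2.2 k hk with h | h
        · exact Set.disjoint_left.mp p.dAC h hcc
        · exact Set.disjoint_left.mp p.dBC h hcc)
    have hAA := AA_of_parts hB.1 (fun k => hm k)
    exact ⟨q₀, hle, hAA.1, hAA.2⟩
  -- forthA
  · intro n p da q db hA p₀ hp
    obtain ⟨q₀, hle, hm, -⟩ := down_lemma q db (fun k => p₀.part (da k))
      (fun k l hk => by show QP.part p₀ (da k) = QP.part p₀ (da l); rw [(hA.1 k l).mpr hk])
      (fun k hk => by
        refine QP.part_eq_c.mpr (hp.1.2 ?_)
        rcases p.mem_cases (da k) with h | h | h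
        · exact absurd hk (Set.disjoint_left.mp q.dAC (hA.2.1 k h))
        · rcases hA.2.2 k h with h' | h'
          · exact absurd hk (Set.disjoint_left.mp q.dAC h')
          · exact absurd hk (Set.disjoint_left.mp q.dBC h')
        · exact h)
      (fun k hk ha => by
        have : da k ∈ p.A := hp.1.1 (QP.part_eq_a.mp ha)
        exact Set.disjoint_left.mp q.dAB (hA.2.1 k this) hk)
    have hAA := AA_of_parts hA.1 (fun k => (hm k).symm)
    exact ⟨q₀, hle, hAA.1, hAA.2⟩
  -- forthB
  · intro n q db p da hB q₀ hq
    obtain ⟨p₀, hle, hm, hv⟩ := down_lemma p da (fun k => q₀.part (db k))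
      (fun k l hk => by show QP.part q₀ (db k) = QP.part q₀ (db l); rw [(hB.1 k l).mpr hk])
      (fun k hk => by
        refine QP.part_eq_c.mpr (hq.2 ?_)
        rcases q.mem_cases (db k) with h | h | h
        · exact absurd hk (Set.disjoint_left.mp p.dAC (hB.2.1 k h))
        · rcases hB.2.2 k h with h' | h'
          · exact absurd hk (Set.disjoint_left.mp p.dAC h')
          · exact absurd hk (Set.disjoint_left.mp p.dBC h')
        · exact h)
      (fun k hk ha => by
        have : db k ∈ q.A := hq.1 (QP.part_eq_a.mp ha)
        exact Set.disjoint_left.mp p.dAB (hB.2.1 k this) hk)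
    have hAA := AA_of_parts hB.1 (fun k => (hm k).symm)
    exact ⟨p₀, ⟨hle, hv⟩, hAA.1, hAA.2⟩
  -- leftA
  · intro n p da q db hA b
    by_cases hbm : b ∈ Set.range db
    · obtain ⟨k, hk⟩ := hbm
      exact ⟨da k, AA_snoc hA (fun l => by rw [← hk]; exact hA.1 l k)
        (fun h => hk ▸ hA.2.1 k h) (fun h => hk ▸ hA.2.2 k h)⟩
    · obtain ⟨x, hx⟩ := (p.infC.diff (Set.finite_range da)).nonempty
      refine ⟨x, AA_snoc hA
        (fun l => iff_of_false (fun h => hx.2 ⟨l, h⟩) (fun h => hbm ⟨l, h⟩)) ?_ ?_⟩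
      · exact fun h => (Set.disjoint_left.mp p.dAC h hx.1).elim
      · exact fun h => (Set.disjoint_left.mp p.dBC h hx.1).elim
  -- leftB
  · intro n q db p da hB a
    by_cases ham : a ∈ Set.range da
    · obtain ⟨k, hk⟩ := ham
      exact ⟨db k, AA_snoc hB (fun l => by rw [← hk]; exact hB.1 l k)
        (fun h => hk ▸ hB.2.1 k h) (fun h => hk ▸ hB.2.2 k h)⟩
    · obtain ⟨x, hx⟩ := (q.infC.diff (Set.finite_range db)).nonempty
      refine ⟨x, AA_snoc hB
        (fun l => iff_of_false (fun h => hx.2 ⟨l, h⟩) (fun h => ham ⟨l, h⟩)) ?_ ?_⟩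
      · exact fun h => (Set.disjoint_left.mp q.dAC h hx.1).elim
      · exact fun h => (Set.disjoint_left.mp q.dBC h hx.1).elim
  -- rightA
  · intro n p da q db hA a
    by_cases ham : a ∈ Set.range da
    · obtain ⟨k, hk⟩ := ham
      exact ⟨db k, AA_snoc hA (fun l => by rw [← hk]; exact hA.1 l k)
        (fun h => by rw [← hk] at h; exact hA.2.1 k h)
        (fun h => by rw [← hk] at h; exact hA.2.2 k h)⟩
    · obtain ⟨b, hb⟩ := (q.infA.diff (Set.finite_range db)).nonempty
      exact ⟨b, AA_snoc hA
        (fun l => iff_of_false (fun h => ham ⟨l, h⟩) (fun h => hb.2 ⟨l, h⟩))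
        (fun _ => hb.1) (fun _ => Or.inl hb.1)⟩
  -- rightB
  · intro n q db p da hB b
    by_cases hbm : b ∈ Set.range db
    · obtain ⟨k, hk⟩ := hbm
      exact ⟨da k, AA_snoc hB (fun l => by rw [← hk]; exact hB.1 l k)
        (fun h => by rw [← hk] at h; exact hB.2.1 k h)
        (fun h => by rw [← hk] at h; exact hB.2.2 k h)⟩
    · obtain ⟨a, ha⟩ := (p.infA.diff (Set.finite_range da)).nonempty
      exact ⟨a, AA_snoc hB
        (fun l => iff_of_false (fun h => hbm ⟨l, h⟩) (fun h => ha.2 ⟨l, h⟩))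
        (fun _ => ha.1) (fun _ => Or.inl ha.1)⟩

end BiAsimProof
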